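/- arXiv:2411.16562 — 8 statements merged into one kernel-verified Lean document; each statement's English description precedes it below -/
import Mathlib

section
/- Let K be a complete nonarchimedean valued field and 0 < \alpha < \beta. Every unit of the ring K\langle\alpha/t, t/\beta\} of Laurent series convergent on the half-open annulus \alpha \le |t| < \beta has bounded coefficients, i.e., lies in K\langle\alpha/t, t/\beta]]_0. Consequently the unit groups of K\langle\alpha/t,t/\beta\} and K\langle\alpha/t,t/\beta]]_0 coincide. -/
/-!
For `α < γ < β` the `γ`-Gauss norm `|z|_γ = sup_i ‖z i‖ γ^i` of a series convergent on the
annulus is attained, and at the pair `(i₀, j₀)` of *last* indices attaining `|x|_γ` and `|y|_γ`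
the coefficient of `t^(i₀ + j₀)` in `x y` has a single dominant term, so
`|x y|_γ ≥ |x|_γ |y|_γ` by the ultrametric inequality. If `x y = 1` this gives
`‖x i‖ γ^i ‖y k‖ γ^k ≤ 1` for all `i, k`; letting `γ → β` and fixing `k` with `y k ≠ 0` bounds
`‖x i‖ β^i`.
-/

open Filter Topology

/-- Convolution product of two Laurent coefficient functions (the multiplication of
Laurent series), defined via an unconditional `tsum`. -/
noncomputable def laurentMul {K : Type*} [NontriviallyNormedField K]
    (x y : ℤ → K) : ℤ → K :=
  fun i => ∑' j : ℤ, x j * y (i - j)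

lemma exists_forall_le_of_tendsto_cofinite_zero {ι : Type*} [Nonempty ι] {f : ι → ℝ}
    (hf0 : 0 ≤ f) (hf : Tendsto f cofinite (𝓝 0)) : ∃ m, ∀ j, f j ≤ f m := by
  by_cases! hpos : ∃ i, 0 < f i
  · obtain ⟨i, hi⟩ := hpos
    have hfin : {j | f i ≤ f j}.Finite := by
      simpa only [not_lt] using eventually_cofinite.mp (hf.eventually_lt_const hi)
    obtain ⟨m, hmi, hm⟩ := Set.exists_max_image _ f hfin ⟨i, show f i ≤ f i from le_rfl⟩
    refine ⟨m, fun j => ?_⟩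
    by_cases hj : f i ≤ f j
    · exact hm j hj
    · exact (not_le.mp hj).le.trans hmi
  · exact ⟨Classical.arbitrary ι, fun j => (hpos j).trans (hf0 _)⟩

lemma exists_last_argmax_of_tendsto_cofinite_zero {ι : Type*} [LinearOrder ι] {f : ι → ℝ}
    (hf0 : 0 ≤ f) (hf : Tendsto f cofinite (𝓝 0)) {i : ι} (hi : 0 < f i) :
    ∃ m, (∀ j, f j ≤ f m) ∧ ∀ j, m < j → f j < f m := by
  have : Nonempty ι := ⟨i⟩
  obtain ⟨m₁, hm₁⟩ := exists_forall_le_of_tendsto_cofinite_zero hf0 hf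
  have hfin : {j | f m₁ ≤ f j}.Finite := by
    simpa only [not_lt] using
      eventually_cofinite.mp (hf.eventually_lt_const (hi.trans_le (hm₁ i)))
  obtain ⟨m, hm₁m, hm⟩ := Set.exists_max_image _ id hfin ⟨m₁, show f m₁ ≤ f m₁ from le_rfl⟩
  have hfm : f m = f m₁ := le_antisymm (hm₁ m) hm₁m
  refine ⟨m, fun j => hfm ▸ hm₁ j, fun j hj => hfm ▸ ?_⟩
  exact lt_of_not_ge fun h => (hm j h).not_gt hj

lemma IsUltrametricDist.norm_tsum_eq_of_forall_norm_lt {ι M : Type*} [NormedAddCommGroup M]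
    [IsUltrametricDist M] {f : ι → M} (hf : Summable f) {i : ι}
    (h : ∀ j ≠ i, ‖f j‖ < ‖f i‖) : ‖∑' j, f j‖ = ‖f i‖ := by
  classical
  set g : ι → M := fun j => if j = i then 0 else f j with hg
  have hgf : ∀ j, ‖g j‖ ≤ ‖f j‖ := fun j => by
    by_cases hj : j = i <;> simp [hg, hj]
  have hg0 : Tendsto (fun j => ‖g j‖) cofinite (𝓝 0) :=
    squeeze_zero (fun _ => norm_nonneg _) hgf
      (tendsto_zero_iff_norm_tendsto_zero.mp hf.tendsto_cofinite_zero)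
  have : Nonempty ι := ⟨i⟩
  obtain ⟨m, hm⟩ := exists_forall_le_of_tendsto_cofinite_zero (fun _ => norm_nonneg _) hg0
  have hsum_le : ‖∑' j, g j‖ ≤ ‖g m‖ := norm_tsum_le_of_forall_le_of_nonneg (norm_nonneg _) hm
  rw [hf.tsum_eq_add_tsum_ite i]
  by_cases hmi : m = i
  · have hzero : ∑' j, g j = 0 := norm_le_zero_iff.mp (by simpa [hg, hmi] using hsum_le)
    rw [hzero, add_zero]
  · have hlt : ‖∑' j, g j‖ < ‖f i‖ := hsum_le.trans_lt (by simpa [hg, hmi] using h m hmi)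
    rw [norm_add_eq_max_of_norm_ne_norm hlt.ne', max_eq_left hlt.le]

lemma tendsto_mul_zpow_cofinite_of_le {a : ℤ → ℝ} (ha : 0 ≤ a) {α γ : ℝ} (hα : 0 < α)
    (hαγ : α ≤ γ) (hbot : Tendsto (fun i => a i * α ^ i) atBot (𝓝 0))
    (htop : Tendsto (fun i => a i * γ ^ i) atTop (𝓝 0)) :
    Tendsto (fun i => a i * γ ^ i) cofinite (𝓝 0) := by
  rw [Int.cofinite_eq]
  refine .sup (squeeze_zero' (Eventually.of_forall fun i =>
    mul_nonneg (ha i) (zpow_pos (hα.trans_le hαγ) i).le) ?_ hbot) htop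
  filter_upwards [eventually_le_atBot 0] with i hi
  have hγα : γ ^ i ≤ α ^ i := by
    simpa only [zpow_neg, inv_inv] using
      inv_anti₀ (zpow_pos hα _) (zpow_le_zpow_left₀ (neg_nonneg.mpr hi) hα.le hαγ)
  exact mul_le_mul_of_nonneg_left hγα (ha i)

section GaussNorm

variable {K : Type*} [NontriviallyNormedField K] [CompleteSpace K] [IsUltrametricDist K]
  {x y : ℤ → K} {γ : ℝ}

lemma norm_laurentMul_mul_zpow_eq_of_last_argmax (hγ : 0 < γ)
    (hy : Tendsto (fun j => ‖y j‖ * γ ^ j) cofinite (𝓝 0)) {i₀ j₀ : ℤ}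
    (hxmax : ∀ j, ‖x j‖ * γ ^ j ≤ ‖x i₀‖ * γ ^ i₀)
    (hxlast : ∀ j, i₀ < j → ‖x j‖ * γ ^ j < ‖x i₀‖ * γ ^ i₀)
    (hymax : ∀ j, ‖y j‖ * γ ^ j ≤ ‖y j₀‖ * γ ^ j₀)
    (hylast : ∀ j, j₀ < j → ‖y j‖ * γ ^ j < ‖y j₀‖ * γ ^ j₀) :
    ‖laurentMul x y (i₀ + j₀)‖ * γ ^ (i₀ + j₀) = ‖x i₀‖ * γ ^ i₀ * (‖y j₀‖ * γ ^ j₀) := by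
  set fx : ℤ → ℝ := fun j => ‖x j‖ * γ ^ j
  set fy : ℤ → ℝ := fun j => ‖y j‖ * γ ^ j
  set N := i₀ + j₀
  have hfx0 : ∀ j, 0 ≤ fx j := fun j => mul_nonneg (norm_nonneg _) (zpow_pos hγ j).le
  have hfy0 : ∀ j, 0 ≤ fy j := fun j => mul_nonneg (norm_nonneg _) (zpow_pos hγ j).le
  have hfx_pos : 0 < fx i₀ := (hfx0 _).trans_lt (hxlast _ (lt_add_one i₀))
  have hfy_pos : 0 < fy j₀ := (hfy0 _).trans_lt (hylast _ (lt_add_one j₀))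
  set t : ℤ → K := fun j => x j * y (N - j)
  have ht : ∀ j, ‖t j‖ = fx j * fy (N - j) / γ ^ N := fun j => by
    rw [eq_div_iff (zpow_pos hγ N).ne', show γ ^ N = γ ^ j * γ ^ (N - j) by
      rw [← zpow_add₀ hγ.ne', add_sub_cancel]]
    simp only [t, fx, fy, norm_mul]
    ring
  have ht₀ : ‖t i₀‖ = fx i₀ * fy j₀ / γ ^ N := by rw [ht, show N - i₀ = j₀ by omega]
  -- the term `j = i₀` dominates: any other `j` loses strictly in `fx` (if `j > i₀`) or in `fy`
  have hdom : ∀ j ≠ i₀, ‖t j‖ < ‖t i₀‖ := fun j hj => by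
    rw [ht, ht₀]
    refine div_lt_div_of_pos_right ?_ (zpow_pos hγ N)
    rcases hj.lt_or_gt with h | h
    · exact (mul_le_mul_of_nonneg_right (hxmax j) (hfy0 _)).trans_lt
        (mul_lt_mul_of_pos_left (hylast _ (by omega)) hfx_pos)
    · exact (mul_le_mul_of_nonneg_left (hymax _) (hfx0 j)).trans_lt
        (mul_lt_mul_of_pos_right (hxlast j h) hfy_pos)
  have ht_summable : Summable t := by
    refine NonarchimedeanAddGroup.summable_of_tendsto_cofinite_zero
      (tendsto_zero_iff_norm_tendsto_zero.mpr ?_)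
    have hbound : Tendsto (fun j => fx i₀ * fy (N - j) / γ ^ N) cofinite (𝓝 0) := by
      simpa using ((hy.comp sub_right_injective.tendsto_cofinite).const_mul (fx i₀)).div_const
        (γ ^ N)
    refine squeeze_zero (fun _ => norm_nonneg _) (fun j => ?_) hbound
    rw [ht]
    exact div_le_div_of_nonneg_right (mul_le_mul_of_nonneg_right (hxmax j) (hfy0 _))
      (zpow_pos hγ N).le
  have hnorm : ‖laurentMul x y N‖ = ‖t i₀‖ :=
    IsUltrametricDist.norm_tsum_eq_of_forall_norm_lt ht_summable hdom
  rw [hnorm, ht₀, div_mul_cancel₀ _ (zpow_pos hγ N).ne']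

lemma exists_norm_mul_zpow_mul_le_norm_laurentMul (hγ : 0 < γ)
    (hx : Tendsto (fun j => ‖x j‖ * γ ^ j) cofinite (𝓝 0))
    (hy : Tendsto (fun j => ‖y j‖ * γ ^ j) cofinite (𝓝 0)) (i k : ℤ) :
    ∃ N, ‖x i‖ * γ ^ i * (‖y k‖ * γ ^ k) ≤ ‖laurentMul x y N‖ * γ ^ N := by
  have hx0 : 0 ≤ fun j => ‖x j‖ * γ ^ j := fun j => mul_nonneg (norm_nonneg _) (zpow_pos hγ j).le
  have hy0 : 0 ≤ fun j => ‖y j‖ * γ ^ j := fun j => mul_nonneg (norm_nonneg _) (zpow_pos hγ j).le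
  rcases (hx0 i).eq_or_lt with hxi | hxi
  · exact ⟨0, by simp [← hxi]⟩
  rcases (hy0 k).eq_or_lt with hyk | hyk
  · exact ⟨0, by simp [← hyk]⟩
  obtain ⟨i₀, hxmax, hxlast⟩ := exists_last_argmax_of_tendsto_cofinite_zero hx0 hx hxi
  obtain ⟨j₀, hymax, hylast⟩ := exists_last_argmax_of_tendsto_cofinite_zero hy0 hy hyk
  refine ⟨i₀ + j₀, ?_⟩
  rw [norm_laurentMul_mul_zpow_eq_of_last_argmax hγ hy hxmax hxlast hymax hylast]
  exact mul_le_mul (hxmax i) (hymax k) (hy0 k) (hx0 i₀)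

lemma norm_mul_zpow_mul_le_one_of_laurentMul_eq_one (hγ : 0 < γ)
    (hx : Tendsto (fun j => ‖x j‖ * γ ^ j) cofinite (𝓝 0))
    (hy : Tendsto (fun j => ‖y j‖ * γ ^ j) cofinite (𝓝 0))
    (hunit : laurentMul x y = fun i => if i = 0 then (1 : K) else 0) (i k : ℤ) :
    ‖x i‖ * γ ^ i * (‖y k‖ * γ ^ k) ≤ 1 := by
  obtain ⟨N, hN⟩ := exists_norm_mul_zpow_mul_le_norm_laurentMul hγ hx hy i k
  refine hN.trans ?_
  rw [hunit]
  by_cases hN0 : N = 0 <;> simp [hN0]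

end GaussNorm

/-- For `0 < α < β`, every unit of the ring `K⟨α/t, t/β}` of Laurent
series convergent on the half-open annulus `α ≤ |t| < β` has bounded coefficients,
i.e. lies in `K⟨α/t, t/β]]₀`: if `x` and `y` both converge on the half-open annulus
and `x * y = 1` (as Laurent series), then `sup_{i ≥ 0} ‖x i‖ β^i < ∞`.
Consequently the unit groups of `K⟨α/t,t/β}` and `K⟨α/t,t/β]]₀` coincide. -/
theorem stmt2 (K : Type*) [NontriviallyNormedField K] [CompleteSpace K]
    [IsUltrametricDist K] (α β : ℝ) (hα : 0 < α) (hαβ : α < β)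
    (x y : ℤ → K)
    (hxneg : Tendsto (fun i : ℤ => ‖x i‖ * α ^ i) atBot (𝓝 0))
    (hxpos : ∀ γ ∈ Set.Ioo (0 : ℝ) β, Tendsto (fun i : ℤ => ‖x i‖ * γ ^ i) atTop (𝓝 0))
    (hyneg : Tendsto (fun i : ℤ => ‖y i‖ * α ^ i) atBot (𝓝 0))
    (hypos : ∀ γ ∈ Set.Ioo (0 : ℝ) β, Tendsto (fun i : ℤ => ‖y i‖ * γ ^ i) atTop (𝓝 0))
    (hunit : laurentMul x y = fun i => if i = 0 then (1 : K) else 0) :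
    ∃ C : ℝ, ∀ i : ℤ, 0 ≤ i → ‖x i‖ * β ^ i ≤ C := by
  have hβ : 0 < β := hα.trans hαβ
  have hbound : ∀ γ ∈ Set.Ioo α β, ∀ i k, ‖x i‖ * γ ^ i * (‖y k‖ * γ ^ k) ≤ 1 :=
    fun γ ⟨hαγ, hγβ⟩ => norm_mul_zpow_mul_le_one_of_laurentMul_eq_one (hα.trans hαγ)
      (tendsto_mul_zpow_cofinite_of_le (fun _ => norm_nonneg _) hα hαγ.le hxneg
        (hxpos γ ⟨hα.trans hαγ, hγβ⟩))
      (tendsto_mul_zpow_cofinite_of_le (fun _ => norm_nonneg _) hα hαγ.le hyneg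
        (hypos γ ⟨hα.trans hαγ, hγβ⟩)) hunit
  have hboundβ : ∀ i k, ‖x i‖ * β ^ i * (‖y k‖ * β ^ k) ≤ 1 := fun i k => by
    have : (𝓝[Set.Ioo α β] β).NeBot := right_nhdsWithin_Ioo_neBot hαβ
    have hcont : ContinuousAt (fun γ : ℝ => ‖x i‖ * γ ^ i * (‖y k‖ * γ ^ k)) β := by
      fun_prop (disch := exact Or.inl hβ.ne')
    exact le_of_tendsto hcont.continuousWithinAt
      (eventually_nhdsWithin_of_forall fun γ hγ => hbound γ hγ i k)
  obtain ⟨k, hk⟩ : ∃ k, y k ≠ 0 := by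
    by_contra! hy
    simpa [laurentMul, hy] using congrFun hunit 0
  have hyk : 0 < ‖y k‖ * β ^ k := mul_pos (norm_pos_iff.mpr hk) (zpow_pos hβ k)
  exact ⟨1 / (‖y k‖ * β ^ k), fun i _ => (le_div_iff₀ hyk).mpr (hboundβ i k)⟩
end

section
/- Let K be a complete nonarchimedean valued field and \beta > 0. Every unit of the ring K\{t/\beta\} of power series converging on the open disc |t| < \beta is a bounded power series, i.e., lies in K[[t/\beta]]_0. -/
/-!
Fix `γ < β`. Since `‖aᵢ‖ γ^i → 0`, the sequence `‖aᵢ‖ γ^i` attains its maximum, and there is a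
first index where it does so. In the coefficient of `t^(i₀ + j₀)` in `f * g`, where `i₀`, `j₀` are
these first maximal indices of `f` and `g`, the term `a_{i₀} b_{j₀}` strictly dominates all the
others, so by the ultrametric inequality that coefficient is nonzero. For `f * g = 1` this forces
`i₀ = j₀ = 0`, i.e. `‖aᵢ‖ γ^i ≤ ‖a₀‖` for all `i`; letting `γ → β` gives the bound `‖a₀‖`.
-/

open Filter Topology PowerSeries

def IsFirstMax (A : ℕ → ℝ) (i₀ : ℕ) : Prop :=
  (∀ j, A j ≤ A i₀) ∧ ∀ i < i₀, A i < A i₀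

lemma exists_isFirstMax_of_tendsto_zero {A : ℕ → ℝ} (hA : Tendsto A atTop (𝓝 0)) {n : ℕ}
    (hn : 0 < A n) : ∃ i₀, IsFirstMax A i₀ := by
  classical
  have hmax : ∃ i, ∀ j, A j ≤ A i :=
    continuous_of_discreteTopology.exists_forall_ge' n <| by
      rw [cocompact_eq_atTop]
      exact (hA.eventually_lt_const hn).mono fun _ h => h.le
  refine ⟨Nat.find hmax, Nat.find_spec hmax, fun i hi => ?_⟩
  obtain ⟨j, hj⟩ := not_forall.mp (Nat.find_min hmax hi)
  exact (not_le.mp hj).trans_le (Nat.find_spec hmax j)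

lemma IsFirstMax.mul_lt {A B : ℕ → ℝ} {i₀ j₀ : ℕ} (hA : IsFirstMax A i₀) (hB : IsFirstMax B j₀)
    (hA0 : 0 ≤ A) (hB0 : 0 ≤ B) (hAi₀ : 0 < A i₀) (hBj₀ : 0 < B j₀) {i j : ℕ}
    (hij : i + j = i₀ + j₀) (hne : (i, j) ≠ (i₀, j₀)) : A i * B j < A i₀ * B j₀ := by
  rcases lt_or_ge i i₀ with hi | hi
  · rw [mul_comm, mul_comm (A i₀)]
    exact mul_lt_mul' (hB.1 j) (hA.2 i hi) (hA0 i) hBj₀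
  · have hj : j < j₀ := by
      by_contra! hj
      exact hne (Prod.ext (by omega) (by omega))
    exact mul_lt_mul' (hA.1 i) (hB.2 j hj) (hB0 j) hAi₀

lemma IsUltrametricDist.norm_sum_eq_of_forall_lt {ι M : Type*} [SeminormedAddCommGroup M]
    [IsUltrametricDist M] {s : Finset ι} {f : ι → M} {i : ι} (hi : i ∈ s)
    (h : ∀ j ∈ s, j ≠ i → ‖f j‖ < ‖f i‖) : ‖∑ j ∈ s, f j‖ = ‖f i‖ := by
  classical
  rw [← Finset.add_sum_erase s f hi]
  rcases (s.erase i).eq_empty_or_nonempty with hs | hs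
  · rw [hs, Finset.sum_empty, add_zero]
  have hrest : ‖∑ j ∈ s.erase i, f j‖ < ‖f i‖ :=
    (hs.norm_sum_le_sup'_norm f).trans_lt <| (Finset.sup'_lt_iff hs).mpr fun j hj =>
      h j (Finset.mem_of_mem_erase hj) (Finset.ne_of_mem_erase hj)
  rw [IsUltrametricDist.norm_add_eq_max_of_norm_ne_norm hrest.ne', max_eq_left hrest.le]

section Ultrametric

variable {K : Type*} [NormedRing K] [NormMulClass K] [IsUltrametricDist K]

lemma PowerSeries.norm_coeff_add_mul_of_isFirstMax {f g : PowerSeries K} {γ : ℝ} (hγ : 0 < γ)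
    {i₀ j₀ : ℕ} (hf : IsFirstMax (fun i => ‖coeff i f‖ * γ ^ i) i₀)
    (hg : IsFirstMax (fun j => ‖coeff j g‖ * γ ^ j) j₀)
    (hf₀ : coeff i₀ f ≠ 0) (hg₀ : coeff j₀ g ≠ 0) :
    ‖coeff (i₀ + j₀) (f * g)‖ = ‖coeff i₀ f‖ * ‖coeff j₀ g‖ := by
  rw [coeff_mul, ← norm_mul]
  refine IsUltrametricDist.norm_sum_eq_of_forall_lt (i := (i₀, j₀))
    (Finset.HasAntidiagonal.mem_antidiagonal.mpr rfl) fun p hp hne => ?_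
  have hlt := hf.mul_lt hg (fun i => by positivity) (fun j => by positivity)
    (mul_pos (norm_pos_iff.mpr hf₀) (pow_pos hγ _)) (mul_pos (norm_pos_iff.mpr hg₀) (pow_pos hγ _))
    (Finset.HasAntidiagonal.mem_antidiagonal.mp hp) hne
  rw [norm_mul, norm_mul]
  have hpow : γ ^ p.1 * γ ^ p.2 = γ ^ i₀ * γ ^ j₀ := by
    rw [← pow_add, ← pow_add, Finset.HasAntidiagonal.mem_antidiagonal.mp hp]
  refine lt_of_mul_lt_mul_right ?_ (by positivity : 0 ≤ γ ^ i₀ * γ ^ j₀)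
  calc ‖coeff p.1 f‖ * ‖coeff p.2 g‖ * (γ ^ i₀ * γ ^ j₀)
      = ‖coeff p.1 f‖ * γ ^ p.1 * (‖coeff p.2 g‖ * γ ^ p.2) := by rw [← hpow]; ring
    _ < ‖coeff i₀ f‖ * γ ^ i₀ * (‖coeff j₀ g‖ * γ ^ j₀) := hlt
    _ = ‖coeff i₀ f‖ * ‖coeff j₀ g‖ * (γ ^ i₀ * γ ^ j₀) := by ring

lemma PowerSeries.norm_coeff_mul_pow_le_of_mul_eq_one [Nontrivial K] {f g : PowerSeries K}
    (hfg : f * g = 1) {γ : ℝ} (hγ : 0 < γ) (hf : Tendsto (fun i => ‖coeff i f‖ * γ ^ i) atTop (𝓝 0))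
    (hg : Tendsto (fun j => ‖coeff j g‖ * γ ^ j) atTop (𝓝 0)) (i : ℕ) :
    ‖coeff i f‖ * γ ^ i ≤ ‖coeff 0 f‖ := by
  have h₀ : coeff 0 f * coeff 0 g = 1 := by simpa using congrArg (coeff 0) hfg
  have hf₀ : 0 < ‖coeff 0 f‖ * γ ^ 0 := by simpa using left_ne_zero_of_mul_eq_one h₀
  have hg₀ : 0 < ‖coeff 0 g‖ * γ ^ 0 := by simpa using right_ne_zero_of_mul_eq_one h₀
  obtain ⟨i₀, hi₀⟩ := exists_isFirstMax_of_tendsto_zero hf hf₀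
  obtain ⟨j₀, hj₀⟩ := exists_isFirstMax_of_tendsto_zero hg hg₀
  have hfi₀ : coeff i₀ f ≠ 0 := fun h => by simpa [h] using hf₀.trans_le (hi₀.1 0)
  have hgj₀ : coeff j₀ g ≠ 0 := fun h => by simpa [h] using hg₀.trans_le (hj₀.1 0)
  have hsum : i₀ + j₀ = 0 := by
    by_contra hn
    have h := norm_coeff_add_mul_of_isFirstMax hγ hi₀ hj₀ hfi₀ hgj₀
    rw [hfg, coeff_one, if_neg hn, norm_zero] at h
    exact mul_ne_zero (norm_ne_zero_iff.mpr hfi₀) (norm_ne_zero_iff.mpr hgj₀) h.symm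
  simpa [Nat.eq_zero_of_add_eq_zero_right hsum] using hi₀.1 i

end Ultrametric

theorem stmt3_general (K : Type*) [NontriviallyNormedField K]
    [IsUltrametricDist K] (β : ℝ) (hβ : 0 < β) (f g : PowerSeries K)
    (hf : ∀ γ ∈ Set.Ioo (0 : ℝ) β,
      Tendsto (fun i : ℕ => ‖coeff i f‖ * γ ^ i) atTop (𝓝 0))
    (hg : ∀ γ ∈ Set.Ioo (0 : ℝ) β,
      Tendsto (fun i : ℕ => ‖coeff i g‖ * γ ^ i) atTop (𝓝 0))
    (hfg : f * g = 1) :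
    ∃ C : ℝ, ∀ i : ℕ, ‖coeff i f‖ * β ^ i ≤ C := by
  refine ⟨‖coeff 0 f‖, fun i => ?_⟩
  have hcont : Tendsto (fun γ : ℝ => ‖coeff i f‖ * γ ^ i) (𝓝[<] β) (𝓝 (‖coeff i f‖ * β ^ i)) :=
    ((continuous_const.mul (continuous_pow i)).tendsto β).mono_left nhdsWithin_le_nhds
  refine le_of_tendsto hcont ?_
  filter_upwards [Ioo_mem_nhdsLT hβ] with γ hγ
  exact norm_coeff_mul_pow_le_of_mul_eq_one hfg hγ.1 (hf γ hγ) (hg γ hγ) i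

/-- For `β > 0`, every unit of the ring `K{t/β}` of power series
converging on the open disc `|t| < β` is a bounded power series, i.e. lies in
`K[[t/β]]₀`: if `f * g = 1` with both `f, g` convergent on the open disc of radius
`β`, then `sup_i ‖coeff i f‖ β^i < ∞`. -/
theorem stmt3 (K : Type*) [NontriviallyNormedField K] [CompleteSpace K]
    [IsUltrametricDist K] (β : ℝ) (hβ : 0 < β) (f g : PowerSeries K)
    (hf : ∀ γ ∈ Set.Ioo (0 : ℝ) β,
      Tendsto (fun i : ℕ => ‖coeff i f‖ * γ ^ i) atTop (𝓝 0))
    (hg : ∀ γ ∈ Set.Ioo (0 : ℝ) β,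
      Tendsto (fun i : ℕ => ‖coeff i g‖ * γ ^ i) atTop (𝓝 0))
    (hfg : f * g = 1) :
    ∃ C : ℝ, ∀ i : ℕ, ‖coeff i f‖ * β ^ i ≤ C :=
  stmt3_general K β hβ f g hf hg hfg
end

section
/- Let R be a differential ring satisfying Condition (S): every principal ideal I of R with d(I) \subseteq I equals (0) or (1). Then the constants R' = ker(d) form a subfield of R (assuming R is nonzero). -/
/-! For a constant `r`, the principal ideal `(r)` is `d`-stable because `d (c * r) = r * d c`,
so Condition (S) makes `r` zero or a unit; the inverse of a unit constant is again constant
since `d (r⁻¹) = -r⁻² d r`. -/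

namespace Derivation

variable {R A : Type*} [CommRing R] [CommRing A] [Algebra R A] (D : Derivation R A A)

def constants : Subring A where
  carrier := {a | D a = 0}
  mul_mem' {a b} (ha : D a = 0) (hb : D b = 0) := show D (a * b) = 0 by simp [leibniz, ha, hb]
  one_mem' := D.map_one_eq_zero
  add_mem' {a b} (ha : D a = 0) (hb : D b = 0) := show D (a + b) = 0 by simp [ha, hb]
  zero_mem' := D.map_zero
  neg_mem' {a} (ha : D a = 0) := show D (-a) = 0 by simp [ha]

variable {D}

theorem mem_constants {a : A} : a ∈ D.constants ↔ D a = 0 := Iff.rfl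

theorem mem_constants_of_mul_eq_one {a b : A} (h : a * b = 1) (hb : b ∈ D.constants) :
    a ∈ D.constants := by
  rw [mem_constants] at hb ⊢
  simp [D.leibniz_of_mul_eq_one h, hb]

theorem map_mem_span_singleton_of_mem_constants {r x : A} (hr : r ∈ D.constants)
    (hx : x ∈ Ideal.span {r}) : D x ∈ Ideal.span {r} := by
  obtain ⟨c, rfl⟩ := Ideal.mem_span_singleton'.mp hx
  rw [mem_constants] at hr
  simp only [leibniz, hr, smul_eq_mul, mul_zero, zero_add]
  exact Ideal.mul_mem_right _ _ (Ideal.mem_span_singleton_self r)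

theorem eq_zero_or_isUnit_of_mem_constants
    (hS : ∀ I : Ideal A, (∃ r : A, I = Ideal.span {r}) → (∀ x ∈ I, D x ∈ I) → I = ⊥ ∨ I = ⊤)
    {r : A} (hr : r ∈ D.constants) : r = 0 ∨ IsUnit r := by
  rcases hS _ ⟨r, rfl⟩ fun x ↦ map_mem_span_singleton_of_mem_constants hr with h | h
  · exact .inl (Ideal.span_singleton_eq_bot.mp h)
  · exact .inr (Ideal.span_singleton_eq_top.mp h)

end Derivation

theorem stmt4_general (R : Type*) [CommRing R]
    (d : R →+ R) (hLeib : ∀ a b : R, d (a * b) = a * d b + b * d a)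
    (hS : ∀ I : Ideal R, (∃ r : R, I = Ideal.span {r}) →
      (∀ x ∈ I, d x ∈ I) → I = ⊥ ∨ I = ⊤) :
    ∃ S : Subring R, (S : Set R) = {r : R | d r = 0} ∧
      ∀ r ∈ S, r ≠ 0 → ∃ s ∈ S, r * s = 1 := by
  let D : Derivation ℤ R R := Derivation.mk' d.toIntLinearMap hLeib
  refine ⟨D.constants, rfl, fun r hr hr0 ↦ ?_⟩
  obtain ⟨u, rfl⟩ := (Derivation.eq_zero_or_isUnit_of_mem_constants hS hr).resolve_left hr0
  exact ⟨↑u⁻¹, Derivation.mem_constants_of_mul_eq_one u.inv_mul hr, u.mul_inv⟩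

/-- Let `R` be a (nonzero) differential ring satisfying Condition (S):
every principal ideal `I` with `d(I) ⊆ I` equals `(0)` or `(1)`. Then the constants
`R' = ker d` form a subfield of `R`: they form a subring, and every nonzero constant
has an inverse that is again a constant. -/
theorem stmt4 (R : Type*) [CommRing R] [Nontrivial R]
    (d : R →+ R) (hLeib : ∀ a b : R, d (a * b) = a * d b + b * d a)
    (hS : ∀ I : Ideal R, (∃ r : R, I = Ideal.span {r}) →
      (∀ x ∈ I, d x ∈ I) → I = ⊥ ∨ I = ⊤) :
    ∃ S : Subring R, (S : Set R) = {r : R | d r = 0} ∧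
      ∀ r ∈ S, r ≠ 0 → ∃ s ∈ S, r * s = 1 :=
  stmt4_general R d hLeib hS
end

section
/- Let R be a differential ring that is an elementary divisor domain satisfying Condition (S) (Property (P)). Then for any morphism \varphi: M \to N of finite free differential modules over R, the kernel and cokernel of \varphi are finite free R-modules. -/
/-!
Pick bases and bring the matrix of `φ` to Smith normal form: up to automorphisms of `Rⁿ` and
`Rᵐ`, `φ` is the rectangular diagonal matrix with entries `a₀, a₁, …`. Its range is then
`∏ᵢ (aᵢ) ⊆ Rᵐ` and its kernel `∏ⱼ Ann(aⱼ) ⊆ Rⁿ`. Because `φ` commutes with the derivations,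
its range is stable under `D_N`; applying `D_N` to `aᵢ eᵢ ∈ range φ` and reading off the `i`-th
coordinate gives `d aᵢ ∈ (aᵢ)`, so by Condition (S) every `aᵢ` is zero or a unit. Kernel and
cokernel are therefore products of copies of `R` and of the zero module.
-/

/-- An elementary divisor ring: every rectangular matrix admits a Smith normal
form via invertible row and column operations, with diagonal entries forming a
divisibility chain. -/
def IsElementaryDivisorRing (R : Type*) [CommRing R] : Prop :=
  ∀ (m n : ℕ) (A : Matrix (Fin m) (Fin n) R),
    ∃ (U : Matrix (Fin m) (Fin m) R) (V : Matrix (Fin n) (Fin n) R) (dd : ℕ → R),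
      IsUnit U.det ∧ IsUnit V.det ∧ (∀ k : ℕ, dd k ∣ dd (k + 1)) ∧
      U * A * V = Matrix.of fun (i : Fin m) (j : Fin n) => if (i : ℕ) = (j : ℕ) then dd (i : ℕ) else 0

open Module Submodule Matrix

section

variable {R : Type*} [CommRing R]

def Submodule.piUnivEquiv {ι : Type*} {Ms : ι → Type*} [∀ i, AddCommGroup (Ms i)]
    [∀ i, Module R (Ms i)] (p : ∀ i, Submodule R (Ms i)) :
    pi Set.univ p ≃ₗ[R] ∀ i, p i where
  toFun x i := ⟨x.1 i, x.2 i (Set.mem_univ i)⟩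
  invFun y := ⟨fun i => y i, fun i _ => (y i).2⟩
  map_add' _ _ := rfl
  map_smul' _ _ := rfl
  left_inv _ := rfl
  right_inv _ := rfl

theorem free_and_finite_pi_torsionBy {ι : Type*} [Finite ι] (a : ι → R)
    (ha : ∀ i, a i = 0 ∨ IsUnit (a i)) :
    Free R (pi Set.univ fun i => torsionBy R R (a i)) ∧
      Module.Finite R (pi Set.univ fun i => torsionBy R R (a i)) := by
  have (i : ι) : Free R (torsionBy R R (a i)) ∧ Module.Finite R (torsionBy R R (a i)) := by
    rcases ha i with h | h
    · have htop : torsionBy R R (a i) = ⊤ := by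
        ext x
        simp [mem_torsionBy_iff, h]
      rw [htop]
      exact ⟨.of_equiv topEquiv.symm, .equiv topEquiv.symm⟩
    · have : Subsingleton (torsionBy R R (a i)) :=
        ⟨fun x y => Subtype.ext <| by
          rw [h.smul_eq_zero.1 ((mem_torsionBy_iff _ _).1 x.2),
            h.smul_eq_zero.1 ((mem_torsionBy_iff _ _).1 y.2)]⟩
      exact ⟨inferInstance, inferInstance⟩
  choose _ _ using this
  exact ⟨.of_equiv (piUnivEquiv _).symm, .equiv (piUnivEquiv _).symm⟩

theorem free_and_finite_quotient_pi_span {ι : Type*} [Fintype ι] [DecidableEq ι] (a : ι → R)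
    (ha : ∀ i, a i = 0 ∨ IsUnit (a i)) :
    Free R ((ι → R) ⧸ pi Set.univ fun i => Ideal.span {a i}) ∧
      Module.Finite R ((ι → R) ⧸ pi Set.univ fun i => Ideal.span {a i}) := by
  have (i : ι) : Free R (R ⧸ Ideal.span {a i}) := by
    rcases ha i with h | h
    · exact .of_equiv (quotEquivOfEqBot _ (Ideal.span_singleton_eq_bot.2 h)).symm
    · have := Submodule.Quotient.subsingleton_iff.2 (Ideal.span_singleton_eq_top.2 h)
      infer_instance
  exact ⟨.of_equiv (quotientPi _).symm, .equiv (quotientPi _).symm⟩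

theorem deriv_mem_span_singleton_of_map_eq_pi {ι N : Type*} [DecidableEq ι] [AddCommGroup N]
    [Module R N] (d : R → R) (D : N →+ N) (hD : ∀ (r : R) (x : N), D (r • x) = d r • x + r • D x)
    (P : Submodule R N) (hP : ∀ x ∈ P, D x ∈ P) (e : N ≃ₗ[R] (ι → R)) (a : ι → R)
    (he : P.map e.toLinearMap = pi Set.univ fun i => Ideal.span {a i}) (i : ι) :
    d (a i) ∈ Ideal.span {a i} := by
  have mem_P (x : N) : x ∈ P ↔ ∀ j, e x j ∈ Ideal.span {a j} := by
    rw [← e.symm_apply_apply x, ← mem_map_equiv, he]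
    simp [mem_pi]
  set y := e.symm (Pi.single i 1)
  have hy : a i • y ∈ P := by
    rw [mem_P]
    intro j
    rcases eq_or_ne j i with rfl | hj
    · simp [y]
    · simp [y, hj]
  have hDy := (mem_P _).1 (hP _ hy) i
  rw [hD, map_add, map_smul, map_smul] at hDy
  refine (Submodule.add_mem_iff_left _ ?_).1 (by simpa [y] using hDy)
  exact Ideal.mul_mem_right _ _ (Ideal.mem_span_singleton_self _)

namespace Matrix

def rectDiagonal {m n : ℕ} (dd : ℕ → R) : Matrix (Fin m) (Fin n) R :=
  of fun i j => if (i : ℕ) = (j : ℕ) then dd i else 0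

theorem rectDiagonal_mulVec_apply {m n : ℕ} (dd : ℕ → R) (x : Fin n → R) (i : Fin m) :
    (rectDiagonal dd *ᵥ x) i = if h : (i : ℕ) < n then dd i * x ⟨i, h⟩ else 0 := by
  simp only [mulVec, dotProduct, rectDiagonal, of_apply, ite_mul, zero_mul]
  split_ifs with h
  · rw [Finset.sum_eq_single ⟨i, h⟩ (fun j _ hj => if_neg fun hij => hj (Fin.ext hij.symm))
      (fun h' => absurd (Finset.mem_univ _) h'), if_pos rfl]
  · exact Finset.sum_eq_zero fun j _ => if_neg fun hij : (i : ℕ) = j => h (hij ▸ j.isLt)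

theorem range_toLin'_rectDiagonal {m n : ℕ} (dd : ℕ → R) :
    LinearMap.range (toLin' (rectDiagonal dd : Matrix (Fin m) (Fin n) R)) =
      pi Set.univ fun i : Fin m => Ideal.span {if (i : ℕ) < n then dd i else 0} := by
  ext y
  simp only [LinearMap.mem_range, toLin'_apply, mem_pi, Set.mem_univ, true_implies,
    Ideal.mem_span_singleton']
  constructor
  · rintro ⟨x, rfl⟩ i
    rw [rectDiagonal_mulVec_apply]
    split_ifs with h
    · exact ⟨x ⟨i, h⟩, mul_comm _ _⟩
    · exact ⟨0, mul_zero _⟩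
  · intro hy
    choose c hc using hy
    refine ⟨fun j => if h : (j : ℕ) < m then c ⟨j, h⟩ else 0, funext fun i => ?_⟩
    rw [rectDiagonal_mulVec_apply, ← hc i]
    by_cases h : (i : ℕ) < n <;> simp [h, mul_comm]

theorem ker_toLin'_rectDiagonal {m n : ℕ} (dd : ℕ → R) :
    LinearMap.ker (toLin' (rectDiagonal dd : Matrix (Fin m) (Fin n) R)) =
      pi Set.univ fun j : Fin n => torsionBy R R (if (j : ℕ) < m then dd j else 0) := by
  ext x
  simp only [LinearMap.mem_ker, toLin'_apply, mem_pi, Set.mem_univ, true_implies,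
    mem_torsionBy_iff, smul_eq_mul, funext_iff, rectDiagonal_mulVec_apply, Pi.zero_apply]
  constructor
  · intro hx j
    split_ifs with h
    · simpa [j.isLt] using hx ⟨j, h⟩
    · exact zero_mul _
  · intro hx i
    split_ifs with h
    · simpa [i.isLt] using hx ⟨i, h⟩
    · rfl

end Matrix

section Conjugate

variable {M M' N N' : Type*} [AddCommGroup M] [Module R M] [AddCommGroup M'] [Module R M']
  [AddCommGroup N] [Module R N] [AddCommGroup N'] [Module R N']
  {eM : M ≃ₗ[R] M'} {eN : N ≃ₗ[R] N'} {φ : M →ₗ[R] N} {ψ : M' →ₗ[R] N'}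

theorem LinearMap.map_ker_eq_ker_of_comp_eq (h : eN.toLinearMap ∘ₗ φ = ψ ∘ₗ eM.toLinearMap) :
    (LinearMap.ker φ).map eM.toLinearMap = LinearMap.ker ψ := by
  rw [← LinearEquiv.ker_comp eN φ, h, LinearMap.ker_comp,
    map_comap_eq_of_surjective eM.surjective]

theorem LinearMap.map_range_eq_range_of_comp_eq (h : eN.toLinearMap ∘ₗ φ = ψ ∘ₗ eM.toLinearMap) :
    (LinearMap.range φ).map eN.toLinearMap = LinearMap.range ψ := by
  rw [← LinearMap.range_comp, h, LinearMap.range_comp_of_range_eq_top _ eM.range]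

end Conjugate

theorem IsElementaryDivisorRing.exists_comp_eq_toLin'_rectDiagonal
    (hR : IsElementaryDivisorRing R) {M N : Type*} [AddCommGroup M] [Module R M]
    [AddCommGroup N] [Module R N] [Free R M] [Module.Finite R M] [Free R N] [Module.Finite R N]
    (φ : M →ₗ[R] N) :
    ∃ (m n : ℕ) (eM : M ≃ₗ[R] (Fin n → R)) (eN : N ≃ₗ[R] (Fin m → R)) (dd : ℕ → R),
      eN.toLinearMap ∘ₗ φ = toLin' (rectDiagonal dd) ∘ₗ eM.toLinearMap := by
  let bM := (Free.chooseBasis R M).reindex (Fintype.equivFin _)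
  let bN := (Free.chooseBasis R N).reindex (Fintype.equivFin _)
  obtain ⟨U, V, dd, hU, hV, -, hUAV⟩ := hR _ _ (LinearMap.toMatrix bM bN φ)
  let eU := toLinearEquiv' U (U.invertibleOfIsUnitDet hU)
  let eV := toLinearEquiv' V (V.invertibleOfIsUnitDet hV)
  refine ⟨_, _, bM.equivFun.trans eV.symm, bN.equivFun.trans eU, dd, ?_⟩
  rw [show rectDiagonal dd = U * LinearMap.toMatrix bM bN φ * V from hUAV.symm,
    toLin'_mul, toLin'_mul]
  ext x : 1
  simp only [LinearMap.comp_apply, LinearEquiv.coe_coe, LinearEquiv.trans_apply, toLin'_apply]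
  rw [show V *ᵥ eV.symm (bM.equivFun x) = bM.equivFun x from eV.apply_symm_apply _,
    bM.equivFun_apply, LinearMap.toMatrix_mulVec_repr]
  rfl

end

theorem stmt11_general (R : Type*) [CommRing R]
    (d : R →+ R)
    (hEDD : IsElementaryDivisorRing R)
    (hS : ∀ r : R, d r ∈ Ideal.span ({r} : Set R) → r = 0 ∨ IsUnit r)
    (M N : Type*) [AddCommGroup M] [Module R M] [AddCommGroup N] [Module R N]
    [Module.Free R M] [Module.Finite R M] [Module.Free R N] [Module.Finite R N]
    (DM : M →+ M)
    (DN : N →+ N) (hDN : ∀ (r : R) (x : N), DN (r • x) = d r • x + r • DN x)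
    (φ : M →ₗ[R] N) (hφ : ∀ x : M, φ (DM x) = DN (φ x)) :
    (Module.Free R (LinearMap.ker φ) ∧ Module.Finite R (LinearMap.ker φ)) ∧
      (Module.Free R (N ⧸ LinearMap.range φ) ∧
        Module.Finite R (N ⧸ LinearMap.range φ)) := by
  classical
  obtain ⟨m, n, eM, eN, dd, hφdiag⟩ := hEDD.exists_comp_eq_toLin'_rectDiagonal φ
  have hker := (LinearMap.map_ker_eq_ker_of_comp_eq hφdiag).trans (ker_toLin'_rectDiagonal dd)
  have hrange :=
    (LinearMap.map_range_eq_range_of_comp_eq hφdiag).trans (range_toLin'_rectDiagonal dd)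
  have hstable : ∀ y ∈ LinearMap.range φ, DN y ∈ LinearMap.range φ := by
    rintro _ ⟨x, rfl⟩
    exact ⟨DM x, hφ x⟩
  have hdd (k : ℕ) (hkm : k < m) (hkn : k < n) : dd k = 0 ∨ IsUnit (dd k) := by
    simpa [hkn] using hS _ <|
      deriv_mem_span_singleton_of_map_eq_pi d DN hDN _ hstable eN _ hrange ⟨k, hkm⟩
  obtain ⟨_, _⟩ :=
    free_and_finite_pi_torsionBy (fun j : Fin n => if (j : ℕ) < m then dd j else 0) fun j => by
      split_ifs with h
      exacts [hdd j h j.isLt, .inl rfl]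
  obtain ⟨_, _⟩ :=
    free_and_finite_quotient_pi_span (fun i : Fin m => if (i : ℕ) < n then dd i else 0) fun i => by
      split_ifs with h
      exacts [hdd i i.isLt h, .inl rfl]
  have eK := (eM.submoduleMap (LinearMap.ker φ)).trans (LinearEquiv.ofEq _ _ hker)
  have eC := Submodule.Quotient.equiv _ _ eN hrange
  exact ⟨⟨.of_equiv eK.symm, .equiv eK.symm⟩, ⟨.of_equiv eC.symm, .equiv eC.symm⟩⟩

/-- Let `R` be a differential ring with Property (P): `R` is an
elementary divisor domain satisfying Condition (S). Then for any morphism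
`φ : M → N` of finite free differential modules over `R`, the kernel and cokernel
of `φ` are finite free `R`-modules. -/
theorem stmt11 (R : Type*) [CommRing R] [IsDomain R]
    (d : R →+ R) (hLeib : ∀ a b : R, d (a * b) = a * d b + b * d a)
    (hEDD : IsElementaryDivisorRing R)
    (hS : ∀ r : R, d r ∈ Ideal.span ({r} : Set R) → r = 0 ∨ IsUnit r)
    (M N : Type*) [AddCommGroup M] [Module R M] [AddCommGroup N] [Module R N]
    [Module.Free R M] [Module.Finite R M] [Module.Free R N] [Module.Finite R N]
    (DM : M →+ M) (hDM : ∀ (r : R) (x : M), DM (r • x) = d r • x + r • DM x)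
    (DN : N →+ N) (hDN : ∀ (r : R) (x : N), DN (r • x) = d r • x + r • DN x)
    (φ : M →ₗ[R] N) (hφ : ∀ x : M, φ (DM x) = DN (φ x)) :
    (Module.Free R (LinearMap.ker φ) ∧ Module.Finite R (LinearMap.ker φ)) ∧
      (Module.Free R (N ⧸ LinearMap.range φ) ∧
        Module.Finite R (N ⧸ LinearMap.range φ)) :=
  stmt11_general R d hEDD hS M N DM DN hDN φ hφ
end

section
/- Let R be a differential ring with Property (P) and \varphi: M \to N an injective morphism of finite free differential modules over R with rank M = rank N. Then \varphi is an isomorphism. -/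
/-!
Over an elementary divisor ring, Smith normal form makes `φ` diagonal, `x ↦ a * x`, with
`a₀ ∣ a₁ ∣ ⋯ ∣ aₙ₋₁`, all nonzero by injectivity. Hence the annihilator of `coker φ` is a nonzero
principal ideal `(δ)`. It is stable under `d`, because `φ` commutes with the derivations: if
`δ • N ⊆ φ M` then `d δ • y = D (δ • y) - δ • D y ∈ φ M`. Property (P) forces `δ` to be a unit,
so `coker φ = 0`.
-/

section Diagonal

variable {R M N : Type*} [CommRing R] [AddCommGroup M] [Module R M] [AddCommGroup N] [Module R N]

open Matrix in
theorem IsElementaryDivisorRing.exists_linearEquiv_diagonal (hR : IsElementaryDivisorRing R)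
    {n : ℕ} (bM : Module.Basis (Fin n) R M) (bN : Module.Basis (Fin n) R N) (φ : M →ₗ[R] N) :
    ∃ (eM : M ≃ₗ[R] (Fin n → R)) (eN : N ≃ₗ[R] (Fin n → R)) (a : Fin n → R),
      (∀ i j, i ≤ j → a i ∣ a j) ∧ ∀ x, eN (φ x) = a * eM x := by
  obtain ⟨U, V, dd, hU, hV, hdd, hUAV⟩ := hR n n (LinearMap.toMatrix bM bN φ)
  let eU := U.toLinearEquiv' (U.invertibleOfIsUnitDet hU)
  let eV := V.toLinearEquiv' (V.invertibleOfIsUnitDet hV)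
  have hdiag : U * LinearMap.toMatrix bM bN φ * V = Matrix.diagonal fun i : Fin n => dd i := by
    rw [hUAV]
    ext i j
    simp [Matrix.diagonal_apply, Fin.val_inj]
  refine ⟨bM.equivFun ≪≫ₗ eV.symm, bN.equivFun ≪≫ₗ eU, fun i => dd i,
    fun i j hij => Nat.rel_of_forall_rel_succ_of_le (· ∣ ·) hdd hij, fun x => ?_⟩
  set w := eV.symm (bM.equivFun x)
  have hw : bM.equivFun x = V *ᵥ w := (eV.apply_symm_apply _).symm
  have hφx : bN.equivFun (φ x) = LinearMap.toMatrix bM bN φ *ᵥ bM.equivFun x := by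
    simpa using (LinearMap.toMatrix_mulVec_repr bM bN φ x).symm
  change U *ᵥ bN.equivFun (φ x) = _ * w
  rw [hφx, hw, Matrix.mulVec_mulVec, Matrix.mulVec_mulVec, hdiag]
  ext i
  exact Matrix.mulVec_diagonal _ _ i

variable {φ : M →ₗ[R] N} {n : ℕ} {eM : M ≃ₗ[R] (Fin n → R)} {eN : N ≃ₗ[R] (Fin n → R)}
  {a : Fin n → R}

theorem mem_range_iff_of_diagonal (hφ : ∀ x, eN (φ x) = a * eM x) (y : N) :
    y ∈ LinearMap.range φ ↔ ∀ i, a i ∣ eN y i := by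
  constructor
  · rintro ⟨x, rfl⟩ i
    rw [hφ]
    exact dvd_mul_right _ _
  · intro hy
    choose c hc using hy
    refine ⟨eM.symm c, eN.injective ?_⟩
    rw [hφ, LinearEquiv.apply_symm_apply]
    ext i
    exact (hc i).symm

theorem mem_annihilator_coker_iff_of_diagonal (hφ : ∀ x, eN (φ x) = a * eM x) (r : R) :
    r ∈ Module.annihilator R (N ⧸ LinearMap.range φ) ↔ ∀ i, a i ∣ r := by
  simp only [Submodule.annihilator_quotient, Submodule.mem_colon, Set.mem_univ, true_implies,
    mem_range_iff_of_diagonal hφ, map_smul, Pi.smul_apply, smul_eq_mul]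
  refine ⟨fun h i => by simpa using h (eN.symm 1) i, fun h y i => (h i).mul_right _⟩

theorem ne_zero_of_injective_of_diagonal [Nontrivial R] (hφ : ∀ x, eN (φ x) = a * eM x)
    (hinj : Function.Injective φ) (i : Fin n) : a i ≠ 0 := by
  intro hai
  have : φ (eM.symm (Pi.single i 1)) = 0 := eN.injective <| by
    rw [hφ, LinearEquiv.apply_symm_apply, map_zero, ← Pi.single_mul_right, hai, mul_one,
      Pi.single_zero]
  simpa using hinj (this.trans (map_zero φ).symm)

end Diagonal

theorem exists_dvd_iff_forall_dvd_of_chain {R : Type*} [CommMonoid R] {n : ℕ} {a : Fin n → R}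
    (ha : ∀ i j, i ≤ j → a i ∣ a j) : ∃ δ : R, ∀ r, δ ∣ r ↔ ∀ i, a i ∣ r := by
  cases n with
  | zero => exact ⟨1, fun r => by simp⟩
  | succ m =>
    exact ⟨a (Fin.last m), fun r => ⟨fun h i => (ha i _ (Fin.le_last i)).trans h, fun h => h _⟩⟩

theorem derivation_mem_annihilator_coker {R M N : Type*} [CommRing R] [AddCommGroup M] [Module R M]
    [AddCommGroup N] [Module R N] (d : R →+ R) (DM : M →+ M) (DN : N →+ N)
    (hDN : ∀ (r : R) (y : N), DN (r • y) = d r • y + r • DN y)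
    (φ : M →ₗ[R] N) (hφ : ∀ x, φ (DM x) = DN (φ x)) {r : R}
    (hr : r ∈ Module.annihilator R (N ⧸ LinearMap.range φ)) :
    d r ∈ Module.annihilator R (N ⧸ LinearMap.range φ) := by
  simp only [Submodule.annihilator_quotient, Submodule.mem_colon, Set.mem_univ, true_implies]
    at hr ⊢
  intro y
  obtain ⟨x, hx⟩ := hr y
  have : d r • y = φ (DM x) - r • DN y := by rw [hφ, hx, hDN, add_sub_cancel_right]
  rw [this]
  exact Submodule.sub_mem _ (LinearMap.mem_range_self φ _) (hr _)

theorem stmt12_general (R : Type*) [CommRing R] [IsDomain R]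
    (d : R →+ R)
    (hEDD : IsElementaryDivisorRing R)
    (hS : ∀ r : R, d r ∈ Ideal.span ({r} : Set R) → r = 0 ∨ IsUnit r)
    (M N : Type*) [AddCommGroup M] [Module R M] [AddCommGroup N] [Module R N]
    [Module.Free R M] [Module.Finite R M] [Module.Free R N] [Module.Finite R N]
    (DM : M →+ M)
    (DN : N →+ N) (hDN : ∀ (r : R) (x : N), DN (r • x) = d r • x + r • DN x)
    (φ : M →ₗ[R] N) (hφ : ∀ x : M, φ (DM x) = DN (φ x))
    (hinj : Function.Injective φ)
    (hrank : Module.finrank R M = Module.finrank R N) :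
    Function.Bijective φ := by
  obtain ⟨eM, eN, a, ha, hφa⟩ := hEDD.exists_linearEquiv_diagonal (Module.finBasis R M)
    ((Module.finBasis R N).reindex (finCongr hrank.symm)) φ
  obtain ⟨δ, hδ⟩ := exists_dvd_iff_forall_dvd_of_chain ha
  have hann (r : R) : r ∈ Module.annihilator R (N ⧸ LinearMap.range φ) ↔ δ ∣ r :=
    (mem_annihilator_coker_iff_of_diagonal hφa r).trans (hδ r).symm
  have hδ0 : δ ≠ 0 := by
    rintro rfl
    have hprod : ∏ i, a i = 0 :=
      zero_dvd_iff.mp ((hδ _).mpr fun i => Finset.dvd_prod_of_mem a (Finset.mem_univ i))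
    obtain ⟨i, -, hi⟩ := Finset.prod_eq_zero_iff.mp hprod
    exact ne_zero_of_injective_of_diagonal hφa hinj i hi
  have hdδ : d δ ∈ Ideal.span {δ} := Ideal.mem_span_singleton.mpr <| (hann _).mp <|
    derivation_mem_annihilator_coker d DM DN hDN φ hφ ((hann δ).mpr dvd_rfl)
  have hδu : IsUnit δ := (hS δ hdδ).resolve_left hδ0
  have htop : Module.annihilator R (N ⧸ LinearMap.range φ) = ⊤ :=
    (Ideal.eq_top_iff_one _).mpr ((hann 1).mpr hδu.dvd)
  rw [Module.annihilator_eq_top_iff, Submodule.Quotient.subsingleton_iff,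
    LinearMap.range_eq_top] at htop
  exact ⟨hinj, htop⟩

/-- Let `R` be a differential ring with Property (P) (elementary
divisor domain satisfying Condition (S)) and `φ : M → N` an injective morphism of
finite free differential modules over `R` with `rank M = rank N`. Then `φ` is an
isomorphism. -/
theorem stmt12 (R : Type*) [CommRing R] [IsDomain R]
    (d : R →+ R) (hLeib : ∀ a b : R, d (a * b) = a * d b + b * d a)
    (hEDD : IsElementaryDivisorRing R)
    (hS : ∀ r : R, d r ∈ Ideal.span ({r} : Set R) → r = 0 ∨ IsUnit r)
    (M N : Type*) [AddCommGroup M] [Module R M] [AddCommGroup N] [Module R N]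
    [Module.Free R M] [Module.Finite R M] [Module.Free R N] [Module.Finite R N]
    (DM : M →+ M) (hDM : ∀ (r : R) (x : M), DM (r • x) = d r • x + r • DM x)
    (DN : N →+ N) (hDN : ∀ (r : R) (x : N), DN (r • x) = d r • x + r • DN x)
    (φ : M →ₗ[R] N) (hφ : ∀ x : M, φ (DM x) = DN (φ x))
    (hinj : Function.Injective φ)
    (hrank : Module.finrank R M = Module.finrank R N) :
    Function.Bijective φ :=
  stmt12_general R d hEDD hS M N DM DN hDN φ hφ hinj hrank
end

section
/- Let R be a differential ring with Property (P) and \varphi: M \to N an injective morphism of finite free differential modules over R. Then the induced morphism \wedge^n \varphi : \wedge^n M \to \wedge^n N on n-th exterior powers is injective for every n. -/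
open Module Function

section

variable {R M N : Type*} [CommRing R] [AddCommGroup M] [Module R M] [AddCommGroup N] [Module R N]

theorem Module.Basis.toMatrix_map_toLinearEquiv {n : Type*} [Fintype n] [DecidableEq n]
    (b : Basis n R M) (A : Matrix n n R) (hA : IsUnit A.det) :
    b.toMatrix (b.map (A.toLinearEquiv b hA)) = A := by
  change b.toMatrix (Matrix.toLin b b A ∘ b) = A
  rw [← LinearMap.toMatrix_eq_basisToMatrix, LinearMap.toMatrix_toLin]

theorem IsElementaryDivisorRing.exists_basis_toMatrix_eq [Nontrivial R]
    (hR : IsElementaryDivisorRing R) [Module.Free R M] [Module.Finite R M]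
    [Module.Free R N] [Module.Finite R N] (φ : M →ₗ[R] N) :
    ∃ (bM : Basis (Fin (finrank R M)) R M) (bN : Basis (Fin (finrank R N)) R N) (a : ℕ → R),
      LinearMap.toMatrix bM bN φ =
        Matrix.of fun (i : Fin _) (j : Fin _) => if (i : ℕ) = j then a i else 0 := by
  let bM := Module.finBasis R M
  let bN := Module.finBasis R N
  obtain ⟨U, V, a, hU, hV, -, hUAV⟩ := hR _ _ (LinearMap.toMatrix bM bN φ)
  refine ⟨bM.map (V.toLinearEquiv bM hV), bN.map (U.toLinearEquiv bN hU).symm, a, ?_⟩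
  rw [← hUAV, ← basis_toMatrix_mul_linearMap_toMatrix_mul_basis_toMatrix (b' := bM) (c' := bN),
    bM.toMatrix_map_toLinearEquiv, Basis.toMatrix_map, LinearEquiv.symm_symm]
  congr
  exact bN.toMatrix_map_toLinearEquiv U hU

theorem map_basis_eq_of_toMatrix_eq {m n : ℕ} {φ : M →ₗ[R] N} {bM : Basis (Fin m) R M}
    {bN : Basis (Fin n) R N} {a : ℕ → R}
    (h : LinearMap.toMatrix bM bN φ = Matrix.of fun (i : Fin n) (j : Fin m) =>
      if (i : ℕ) = j then a i else 0) (j : Fin m) :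
    φ (bM j) = if hj : (j : ℕ) < n then a j • bN ⟨j, hj⟩ else 0 := by
  rw [← bN.sum_repr (φ (bM j))]
  simp_rw [← LinearMap.toMatrix_apply, h, Matrix.of_apply, ite_smul, zero_smul]
  split_ifs with hj
  · rw [Finset.sum_eq_single ⟨j, hj⟩ (fun i _ hi => if_neg fun h => hi (Fin.ext h)) (by simp)]
    simp
  · exact Finset.sum_eq_zero fun i _ => if_neg fun (h : (i : ℕ) = j) => hj (h ▸ i.isLt)

theorem IsElementaryDivisorRing.exists_basis_map_eq_smul_of_injective [Nontrivial R]
    (hR : IsElementaryDivisorRing R) [Module.Free R M] [Module.Finite R M]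
    [Module.Free R N] [Module.Finite R N] {φ : M →ₗ[R] N} (hφ : Injective φ) :
    ∃ (bM : Basis (Fin (finrank R M)) R M) (bN : Basis (Fin (finrank R N)) R N)
      (e : Fin (finrank R M) → Fin (finrank R N)) (a : Fin (finrank R M) → R),
      Injective e ∧ ∀ j, φ (bM j) = a j • bN (e j) := by
  obtain ⟨bM, bN, a, h⟩ := hR.exists_basis_toMatrix_eq φ
  have hlt (j : Fin (finrank R M)) : (j : ℕ) < finrank R N := by
    by_contra hj
    have h0 := map_basis_eq_of_toMatrix_eq h j
    rw [dif_neg hj, ← map_zero φ] at h0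
    exact bM.ne_zero j (hφ h0)
  refine ⟨bM, bN, fun j => ⟨j, hlt j⟩, fun j => a j, fun i j h => Fin.ext (Fin.mk.inj h),
    fun j => ?_⟩
  rw [map_basis_eq_of_toMatrix_eq h j, dif_pos (hlt j)]

section AdaptedBases

variable {ι κ : Type*} {φ : M →ₗ[R] N} {bM : Basis ι R M} {bN : Basis κ R N} {e : ι → κ}
  {a : ι → R}

theorem dvd_coord_map (he : Injective e) (hφ : ∀ j, φ (bM j) = a j • bN (e j)) (i : ι)
    (x : M) : a i ∣ bN.coord (e i) (φ x) := by
  have hcomp : bN.coord (e i) ∘ₗ φ = a i • bM.coord i := bM.ext fun j => by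
    by_cases hji : j = i
    · simp [hji, hφ]
    · simp [hφ, hji, he.ne hji]
  exact ⟨bM.coord i x, by rw [← LinearMap.comp_apply, hcomp]; rfl⟩

theorem exists_leftInverse_of_isUnit (he : Injective e) (hφ : ∀ j, φ (bM j) = a j • bN (e j))
    (ha : ∀ j, IsUnit (a j)) : ∃ ψ : N →ₗ[R] M, ψ ∘ₗ φ = LinearMap.id := by
  refine ⟨bN.constr R (extend e (fun j => (ha j).unit⁻¹ • bM j) 0), bM.ext fun j => ?_⟩
  rw [LinearMap.comp_apply, hφ, map_smul, Basis.constr_basis, he.extend_apply,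
    LinearMap.id_apply]
  exact smul_inv_smul (ha j).unit (bM j)

end AdaptedBases

theorem dvd_deriv_of_map_eq_smul {d : R → R} {DM : M → M} {DN : N → N}
    (hDN : ∀ (r : R) (x : N), DN (r • x) = d r • x + r • DN x) {φ : M →ₗ[R] N}
    (hφ : ∀ x, φ (DM x) = DN (φ x)) {c : N →ₗ[R] R} {r : R} (hc : ∀ x, r ∣ c (φ x))
    {u : M} {w : N} (hu : φ u = r • w) (hw : c w = 1) : r ∣ d r := by
  have hDu : c (φ (DM u)) = d r + r * c (DN w) := by
    rw [hφ, hu, hDN, map_add, map_smul, map_smul, hw, smul_eq_mul, smul_eq_mul, mul_one]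
  have := (hc (DM u)).sub (dvd_mul_right r (c (DN w)))
  rwa [hDu, add_sub_cancel_right] at this

end

theorem stmt13_general (R : Type*) [CommRing R] [IsDomain R]
    (d : R →+ R)
    (hEDD : IsElementaryDivisorRing R)
    (hS : ∀ r : R, d r ∈ Ideal.span ({r} : Set R) → r = 0 ∨ IsUnit r)
    (M N : Type*) [AddCommGroup M] [Module R M] [AddCommGroup N] [Module R N]
    [Module.Free R M] [Module.Finite R M] [Module.Free R N] [Module.Finite R N]
    (DM : M →+ M)
    (DN : N →+ N) (hDN : ∀ (r : R) (x : N), DN (r • x) = d r • x + r • DN x)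
    (φ : M →ₗ[R] N) (hφ : ∀ x : M, φ (DM x) = DN (φ x))
    (hinj : Function.Injective φ) :
    ∀ n : ℕ, Set.InjOn (ExteriorAlgebra.map φ)
      ((⋀[R]^n M : Submodule R (ExteriorAlgebra R M)) : Set (ExteriorAlgebra R M)) := by
  obtain ⟨bM, bN, e, a, he, hφa⟩ :=
    IsElementaryDivisorRing.exists_basis_map_eq_smul_of_injective hEDD hinj
  have ha (j : Fin (finrank R M)) : IsUnit (a j) := by
    have hdvd : a j ∣ d (a j) :=
      dvd_deriv_of_map_eq_smul hDN hφ (dvd_coord_map he hφa j) (hφa j) (by simp)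
    refine (hS _ (Ideal.mem_span_singleton.mpr hdvd)).resolve_left fun h0 => bM.ne_zero j (hinj ?_)
    rw [hφa, h0, zero_smul, map_zero]
  exact fun n => (ExteriorAlgebra.map_injective (exists_leftInverse_of_isUnit he hφa ha)).injOn

/-- Let `R` be a differential ring with Property (P) and
`φ : M → N` an injective morphism of finite free differential modules over `R`.
Then the induced morphism `⋀ⁿ φ : ⋀ⁿ M → ⋀ⁿ N` on `n`-th exterior powers
(realized as the restriction of `ExteriorAlgebra.map φ` to the `n`-th exterior
power submodule) is injective for every `n`. -/
theorem stmt13 (R : Type*) [CommRing R] [IsDomain R]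
    (d : R →+ R) (hLeib : ∀ a b : R, d (a * b) = a * d b + b * d a)
    (hEDD : IsElementaryDivisorRing R)
    (hS : ∀ r : R, d r ∈ Ideal.span ({r} : Set R) → r = 0 ∨ IsUnit r)
    (M N : Type*) [AddCommGroup M] [Module R M] [AddCommGroup N] [Module R N]
    [Module.Free R M] [Module.Finite R M] [Module.Free R N] [Module.Finite R N]
    (DM : M →+ M) (hDM : ∀ (r : R) (x : M), DM (r • x) = d r • x + r • DM x)
    (DN : N →+ N) (hDN : ∀ (r : R) (x : N), DN (r • x) = d r • x + r • DN x)
    (φ : M →ₗ[R] N) (hφ : ∀ x : M, φ (DM x) = DN (φ x))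
    (hinj : Function.Injective φ) :
    ∀ n : ℕ, Set.InjOn (ExteriorAlgebra.map φ)
      ((⋀[R]^n M : Submodule R (ExteriorAlgebra R M)) : Set (ExteriorAlgebra R M)) :=
  stmt13_general R d hEDD hS M N DM DN hDN φ hφ hinj
end

section
/- Let K be a complete nonarchimedean valued field. There is a short exact sequence of K[[t]]_0-modules 0 \to K[[t]]_0 \to K\{t\} \times K\langle\alpha/t,t]]_0 \to K\langle\alpha/t,t\} \to 0 for any \alpha \in (0,1), where the first map is the diagonal of the inclusions and the second is the difference of the inclusions. In particular K[[t]]_0 = K\{t\} \cap K\langle\alpha/t,t]]_0 inside K\langle\alpha/t,t\}, and every element of K\langle\alpha/t,t\} is the difference of an element of K\{t\} and an element of K\langle\alpha/t,t]]_0. -/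
/-! Everything is coefficientwise. A bounded sequence times `γ ^ i` tends to `0` for `γ < 1`,
and a Laurent series in `K⟨α/t, t}` splits as its nonnegative-degree part, which lies in `K{t}`,
minus its negated principal part, which lies in `K⟨α/t, t]]₀` because it vanishes in
nonnegative degrees. -/

open Filter Topology

namespace Stmt14

variable (K : Type*) [NontriviallyNormedField K]

/-- Extension of a power series (coefficient function `ℕ → K`) to a Laurent series. -/
def ext (f : ℕ → K) : ℤ → K := fun i => if h : 0 ≤ i then f i.toNat else 0

/-- `K{t}`: power series converging on the open unit disc. -/
def ConvOpen (f : ℕ → K) : Prop :=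
  ∀ γ ∈ Set.Ioo (0 : ℝ) 1, Tendsto (fun i : ℕ => ‖f i‖ * γ ^ i) atTop (𝓝 0)

/-- `K[[t]]₀`: bounded power series on the open unit disc. -/
def Bdd (f : ℕ → K) : Prop := ∃ C : ℝ, ∀ i : ℕ, ‖f i‖ ≤ C

/-- `K⟨α/t, t]]₀`: Laurent series convergent for `|t| ≥ α` with bounded
nonnegative part. -/
def AnnBdd (α : ℝ) (g : ℤ → K) : Prop :=
  Tendsto (fun i : ℤ => ‖g i‖ * α ^ i) atBot (𝓝 0) ∧
    ∃ C : ℝ, ∀ i : ℤ, 0 ≤ i → ‖g i‖ ≤ C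

/-- `K⟨α/t, t}`: Laurent series convergent on the half-open annulus `α ≤ |t| < 1`. -/
def AnnConv (α : ℝ) (h : ℤ → K) : Prop :=
  Tendsto (fun i : ℤ => ‖h i‖ * α ^ i) atBot (𝓝 0) ∧
    ∀ γ ∈ Set.Ioo (0 : ℝ) 1, Tendsto (fun i : ℤ => ‖h i‖ * γ ^ i) atTop (𝓝 0)

variable {K}

@[simp]
theorem ext_natCast (f : ℕ → K) (n : ℕ) : ext K f n = f n := by
  simp [ext]

theorem ext_of_neg (f : ℕ → K) {i : ℤ} (hi : i < 0) : ext K f i = 0 := by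
  simp [ext, not_le.mpr hi]

theorem ext_of_nonneg (f : ℕ → K) {i : ℤ} (hi : 0 ≤ i) : ext K f i = f i.toNat := by
  simp [ext, hi]

theorem ext_injective : Function.Injective (ext K) := fun f f' hff' =>
  funext fun n => by simpa using congrFun hff' n

theorem Bdd.convOpen {f : ℕ → K} (hf : Bdd K f) : ConvOpen K f := by
  obtain ⟨C, hC⟩ := hf
  intro γ ⟨hγ0, hγ1⟩
  have hCγ : Tendsto (fun i : ℕ => C * γ ^ i) atTop (𝓝 0) := by
    simpa using (tendsto_pow_atTop_nhds_zero_of_lt_one hγ0.le hγ1).const_mul C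
  exact squeeze_zero (fun i => by positivity)
    (fun i => mul_le_mul_of_nonneg_right (hC i) (by positivity)) hCγ

theorem Bdd.annBdd_ext {f : ℕ → K} (hf : Bdd K f) (α : ℝ) : AnnBdd K α (ext K f) := by
  obtain ⟨C, hC⟩ := hf
  refine ⟨tendsto_const_nhds.congr' ?_, C, fun i hi => ?_⟩
  · filter_upwards [eventually_lt_atBot (0 : ℤ)] with i hi
    simp [ext_of_neg f hi]
  · simpa [ext_of_nonneg f hi] using hC i.toNat

theorem AnnBdd.bdd_of_ext {f : ℕ → K} {α : ℝ} (hf : AnnBdd K α (ext K f)) : Bdd K f := by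
  obtain ⟨-, C, hC⟩ := hf
  exact ⟨C, fun n => by simpa using hC n n.cast_nonneg⟩

def negPrincipalPart (h : ℤ → K) : ℤ → K := fun i => if i < 0 then -h i else 0

theorem ext_sub_negPrincipalPart (h : ℤ → K) :
    (fun i => ext K (fun n : ℕ => h n) i - negPrincipalPart h i) = h := by
  funext i
  rcases lt_or_ge i 0 with hi | hi
  · simp [negPrincipalPart, ext_of_neg _ hi, hi]
  · simp [negPrincipalPart, ext_of_nonneg _ hi, not_lt.mpr hi, Int.toNat_of_nonneg hi]

theorem AnnConv.convOpen_natCast {α : ℝ} {h : ℤ → K} (hh : AnnConv K α h) :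
    ConvOpen K (fun n : ℕ => h n) := fun γ hγ =>
  ((hh.2 γ hγ).comp tendsto_natCast_atTop_atTop).congr fun n => by simp

theorem AnnConv.annBdd_negPrincipalPart {α : ℝ} {h : ℤ → K} (hh : AnnConv K α h) :
    AnnBdd K α (negPrincipalPart h) := by
  refine ⟨hh.1.congr' ?_, 0, fun i hi => by simp [negPrincipalPart, not_lt.mpr hi]⟩
  filter_upwards [eventually_lt_atBot (0 : ℤ)] with i hi
  simp [negPrincipalPart, hi]

variable (K)

theorem stmt14 (α : ℝ) :
    -- every bounded power series converges on the open disc and extends to both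
    -- middle terms (well-definedness of the first map)
    (∀ f : ℕ → K, Bdd K f → ConvOpen K f ∧ AnnBdd K α (ext K f)) ∧
    -- injectivity of the first map (it is the diagonal of injections)
    (∀ f f' : ℕ → K, ext K f = ext K f' → f = f') ∧
    -- exactness in the middle: a pair mapping to zero comes from `K[[t]]₀`
    (∀ (f : ℕ → K) (g : ℤ → K), ConvOpen K f → AnnBdd K α g →
      ext K f = g → Bdd K f) ∧
    -- surjectivity of the difference map
    (∀ h : ℤ → K, AnnConv K α h →
      ∃ (f : ℕ → K) (g : ℤ → K), ConvOpen K f ∧ AnnBdd K α g ∧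
        h = fun i => ext K f i - g i) := by
  refine ⟨fun f hf => ⟨hf.convOpen, hf.annBdd_ext α⟩, fun _ _ => (ext_injective ·), ?_, ?_⟩
  · rintro f g - hg rfl
    exact hg.bdd_of_ext
  · intro h hh
    exact ⟨_, _, hh.convOpen_natCast, hh.annBdd_negPrincipalPart,
      (ext_sub_negPrincipalPart h).symm⟩

end Stmt14
end

section
/- Let K be a complete discretely valued field of mixed characteristic (0,p), M a finite free differential module over K[[t]]_0 of rank m, and n = \dim_K H^0(M \otimes K\{t\}). If M satisfies Condition (D), then every horizontal section of M \otimes K\{t\} has logarithmic growth of order at most n-1, i.e., Fil_{n-1} H^0(M\otimes K\{t\}) = H^0(M\otimes K\{t\}). -/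
open Filter Topology PowerSeries

namespace Stmt15

variable (K : Type*) [NontriviallyNormedField K]

/-- Membership in `K[[t]]₀`: a power series with bounded coefficients. -/
def Bdd (f : PowerSeries K) : Prop := ∃ C : ℝ, ∀ i : ℕ, ‖coeff i f‖ ≤ C

/-- Membership in `K{t}`: a power series converging on the open unit disc. -/
def ConvOpen (f : PowerSeries K) : Prop :=
  ∀ γ ∈ Set.Ioo (0 : ℝ) 1, Tendsto (fun i : ℕ => ‖coeff i f‖ * γ ^ i) atTop (𝓝 0)

/-- Membership in `K[[t]]_δ`: logarithmic growth of order at most `δ`. -/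
def LogBdd (δ : ℝ) (f : PowerSeries K) : Prop :=
  ∃ C : ℝ, ∀ i : ℕ, ‖coeff i f‖ ≤ C * ((i : ℝ) + 1) ^ δ

/-- A horizontal section of the differential module (of rank `m`, with differential
operator `v ↦ v' + A·v` in a fixed basis) tensored with `K{t}`: a vector of series
converging on the open unit disc, killed by the differential operator. -/
def Horiz {m : ℕ} (A : Matrix (Fin m) (Fin m) (PowerSeries K))
    (v : Fin m → PowerSeries K) : Prop :=
  (∀ i, ConvOpen K (v i)) ∧
    ∀ i, derivativeFun (v i) + ∑ j, A i j * v j = 0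

/-- Condition (D) for the differential module given by the matrix `A` of rank `m`,
with `V` a `K`-basis of `H⁰(M ⊗ K{t})` of cardinality `n`: there exist a finite
free differential module `L` over `K[[t]]₀` of rank `n` (given by a matrix `B`
with bounded entries), an injective morphism `φ : L → M` (given by the `m × n`
matrix `Φm` with bounded entries, intertwining the differential operators), and an
isomorphism `θ : L ⊗ K{t} → P = H⁰(M ⊗ K{t}) ⊗ K{t}` (given by the invertible
matrix `Θ` over `K{t}`, horizontal for the differential operator of `L` and the
trivial one of `P`) such that `Φ ∘ θ = φ ⊗ id`. -/
def CondD {m n : ℕ} (A : Matrix (Fin m) (Fin m) (PowerSeries K))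
    (V : Fin n → (Fin m → PowerSeries K)) : Prop :=
  ∃ (B : Matrix (Fin n) (Fin n) (PowerSeries K))
    (Φm : Matrix (Fin m) (Fin n) (PowerSeries K))
    (Θ Θinv : Matrix (Fin n) (Fin n) (PowerSeries K)),
      (∀ i j, Bdd K (B i j)) ∧
      (∀ i j, Bdd K (Φm i j)) ∧
      -- `φ` is injective
      (∀ x : Fin n → PowerSeries K, Φm.mulVec x = 0 → x = 0) ∧
      -- `φ` is a morphism of differential modules: `D_M ∘ φ = φ ∘ D_L`
      (∀ i j, derivativeFun (Φm i j) + ∑ k, A i k * Φm k j = ∑ k, Φm i k * B k j) ∧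
      -- `θ` is an isomorphism over `K{t}` ...
      (∀ i j, ConvOpen K (Θ i j)) ∧ (∀ i j, ConvOpen K (Θinv i j)) ∧
      Θ * Θinv = 1 ∧ Θinv * Θ = 1 ∧
      -- ... of differential modules (the differential operator of `P` is trivial
      -- in the horizontal basis `V`)
      (∀ i j, derivativeFun (Θ i j) = ∑ k, Θ i k * B k j) ∧
      -- compatibility `Φ ∘ θ = φ ⊗ id`
      (∀ i j, Φm i j = ∑ k, V k i * Θ k j)

end Stmt15

/-!
The columns of `θ⁻¹` are `n` horizontal sections of `L ⊗ K{t}`, linearly independent over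
`K` because `θ⁻¹` is invertible over `K{t}`; so `L` is solvable of rank `n` and Dwork's
theorem bounds the growth of its horizontal sections by `n - 1`. A horizontal section `v` of
`M ⊗ K{t}` is a `K`-combination of the basis of `H⁰`, hence `v = φ(w)` with `w = θ⁻¹(v)`
horizontal for `L`. The entries of `φ` are bounded, and over an ultrametric field
multiplication by a bounded series preserves logarithmic growth.
-/

section Derivation

variable {A R : Type*} [CommSemiring A] [CommRing R] [Algebra A R] (D : Derivation A R R)
  {l m n : Type*} [Fintype m]

theorem Derivation.map_matrix_mul (M : Matrix l m R) (N : Matrix m n R) :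
    (M * N).map D = M.map D * N + M * N.map D := by
  ext i j
  simp only [Matrix.map_apply, Matrix.mul_apply, Matrix.add_apply, map_sum, Derivation.leibniz,
    smul_eq_mul, ← Finset.sum_add_distrib]
  exact Finset.sum_congr rfl fun k _ => by ring

theorem Derivation.map_matrix_inv_eq [Fintype n] [DecidableEq n] {X Y B : Matrix n n R}
    (hXY : X * Y = 1) (hYX : Y * X = 1) (hX : X.map D = X * B) : Y.map D = -(B * Y) := by
  have hone : (1 : Matrix n n R).map D = 0 := by
    ext i j
    by_cases h : i = j <;> simp [h]
  have h := D.map_matrix_mul X Y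
  rw [hXY, hone, hX, eq_comm, add_eq_zero_iff_neg_eq] at h
  calc Y.map D = Y * (X * Y.map D) := by rw [← Matrix.mul_assoc, hYX, Matrix.one_mul]
    _ = Y * -(X * B * Y) := by rw [h]
    _ = -(B * Y) := by
      rw [Matrix.mul_neg, Matrix.mul_assoc X, ← Matrix.mul_assoc Y, hYX, Matrix.one_mul]

end Derivation

theorem Matrix.mulVec_algebraMap_eq_sum_smul_col {S R : Type*} [CommSemiring S] [CommSemiring R]
    [Algebra S R] {m n : Type*} [Fintype n] (M : Matrix m n R) (c : n → S) :
    (M.mulVec fun j => algebraMap S R (c j)) = ∑ j, c j • M.col j := by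
  ext i
  simp [Matrix.mulVec, dotProduct, Algebra.smul_def, mul_comm]

namespace Stmt15

variable {K : Type*} [NontriviallyNormedField K]

theorem derivativeFun_eq_derivative (f : PowerSeries K) : derivativeFun f = d⁄dX K f := rfl

theorem ConvOpen.zero : ConvOpen K 0 := fun _ _ => by simp

theorem ConvOpen.add {f g : PowerSeries K} (hf : ConvOpen K f) (hg : ConvOpen K g) :
    ConvOpen K (f + g) := by
  intro γ hγ
  have hγi (i : ℕ) : 0 ≤ γ ^ i := pow_nonneg hγ.1.le i
  refine squeeze_zero (fun i => mul_nonneg (norm_nonneg _) (hγi i)) (fun i => ?_)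
    (by simpa using (hf γ hγ).add (hg γ hγ))
  rw [map_add, ← add_mul]
  exact mul_le_mul_of_nonneg_right (norm_add_le _ _) (hγi i)

theorem ConvOpen.smul {f : PowerSeries K} (c : K) (hf : ConvOpen K f) :
    ConvOpen K (c • f) := fun γ hγ => by
  simpa [coeff_smul, norm_smul, mul_assoc] using (hf γ hγ).const_mul ‖c‖

theorem LogBdd.sum {ι : Type*} {δ : ℝ} {s : Finset ι} {f : ι → PowerSeries K}
    (h : ∀ i ∈ s, LogBdd K δ (f i)) : LogBdd K δ (∑ i ∈ s, f i) := by
  classical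
  induction s using Finset.induction_on with
  | empty => exact ⟨0, fun i => by simp⟩
  | insert a s ha ih =>
    obtain ⟨C₁, hC₁⟩ := h a (Finset.mem_insert_self a s)
    obtain ⟨C₂, hC₂⟩ := ih fun i hi => h i (Finset.mem_insert_of_mem hi)
    refine ⟨C₁ + C₂, fun i => ?_⟩
    rw [Finset.sum_insert ha, map_add, add_mul]
    exact (norm_add_le _ _).trans (add_le_add (hC₁ i) (hC₂ i))

/-- Ultrametricity bounds the convolution sum for the `i`-th coefficient by its largest term,
so no factor `i + 1` is lost. -/
theorem Bdd.mul_logBdd [IsUltrametricDist K] {δ : ℝ} (hδ : 0 ≤ δ) {f g : PowerSeries K}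
    (hf : Bdd K f) (hg : LogBdd K δ g) : LogBdd K δ (f * g) := by
  obtain ⟨Cf, hCf⟩ := hf
  obtain ⟨Cg, hCg⟩ := hg
  have hCf₀ : 0 ≤ Cf := (norm_nonneg _).trans (hCf 0)
  have hCg₀ : 0 ≤ Cg := by simpa using (norm_nonneg _).trans (hCg 0)
  refine ⟨Cf * Cg, fun i => ?_⟩
  rw [coeff_mul]
  refine IsUltrametricDist.norm_sum_le_of_forall_le_of_nonneg (by positivity) ?_
  rintro ⟨a, b⟩ hab
  have hbi : (b : ℝ) + 1 ≤ i + 1 := by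
    rw [Finset.HasAntidiagonal.mem_antidiagonal] at hab
    exact_mod_cast Nat.succ_le_succ (Nat.le.intro (add_comm a b ▸ hab))
  calc ‖coeff a f * coeff b g‖ = ‖coeff a f‖ * ‖coeff b g‖ := norm_mul _ _
    _ ≤ Cf * (Cg * ((b : ℝ) + 1) ^ δ) := mul_le_mul (hCf a) (hCg b) (norm_nonneg _) hCf₀
    _ ≤ Cf * (Cg * ((i : ℝ) + 1) ^ δ) := by gcongr
    _ = Cf * Cg * ((i : ℝ) + 1) ^ δ := by ring

open Matrix

variable (K) in
def horizontalSections {m : ℕ} (A : Matrix (Fin m) (Fin m) (PowerSeries K)) :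
    Submodule K (Fin m → PowerSeries K) where
  carrier := {v | Horiz K A v}
  zero_mem' := ⟨fun _ => ConvOpen.zero, fun _ => by simp [derivativeFun_eq_derivative]⟩
  add_mem' := by
    rintro v w ⟨hvc, hvd⟩ ⟨hwc, hwd⟩
    refine ⟨fun i => (hvc i).add (hwc i), fun i => ?_⟩
    simp only [Pi.add_apply, derivativeFun_eq_derivative, map_add, mul_add,
      Finset.sum_add_distrib] at hvd hwd ⊢
    linear_combination hvd i + hwd i
  smul_mem' := by
    rintro c v ⟨hvc, hvd⟩
    refine ⟨fun i => (hvc i).smul c, fun i => ?_⟩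
    simp only [Pi.smul_apply, derivativeFun_eq_derivative, Derivation.map_smul, mul_smul_comm,
      ← Finset.smul_sum, ← smul_add] at hvd ⊢
    rw [hvd i, smul_zero]

theorem col_mem_horizontalSections {n : ℕ} {B Θ Θinv : Matrix (Fin n) (Fin n) (PowerSeries K)}
    (hΘ : Θ.map (d⁄dX K) = Θ * B) (hΘΘinv : Θ * Θinv = 1) (hΘinvΘ : Θinv * Θ = 1)
    (hΘinv : ∀ i j, ConvOpen K (Θinv i j)) (j : Fin n) :
    Θinv.col j ∈ horizontalSections K B := by
  have hderiv := (d⁄dX K).map_matrix_inv_eq hΘΘinv hΘinvΘ hΘ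
  refine ⟨fun i => hΘinv i j, fun i => ?_⟩
  change d⁄dX K (Θinv i j) + (B * Θinv) i j = 0
  rw [← Matrix.map_apply (f := d⁄dX K), hderiv, Matrix.neg_apply, neg_add_cancel]

theorem stmt15_general [IsUltrametricDist K]
    (m n : ℕ) (A : Matrix (Fin m) (Fin m) (PowerSeries K))
    -- `V` is a `K`-basis of `H⁰(M ⊗ K{t})`, so `n = dim_K H⁰(M ⊗ K{t})`
    (V : Fin n → (Fin m → PowerSeries K))
    (hVspan : ∀ v : Fin m → PowerSeries K, Horiz K A v →
      ∃ c : Fin n → K, v = fun i => ∑ k, PowerSeries.C (c k) * V k i)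
    -- Dwork's theorem, taken as given
    (hDwork : ∀ (r : ℕ) (B : Matrix (Fin r) (Fin r) (PowerSeries K)),
      (∀ i j, Bdd K (B i j)) →
      (∃ W : Fin r → (Fin r → PowerSeries K),
        (∀ k, Horiz K B (W k)) ∧ LinearIndependent K W) →
      ∀ w : Fin r → PowerSeries K, Horiz K B w →
        ∀ i, LogBdd K ((r : ℝ) - 1) (w i))
    -- Condition (D)
    (hD : CondD K A V) :
    ∀ v : Fin m → PowerSeries K, Horiz K A v →
      ∀ i, LogBdd K ((n : ℝ) - 1) (v i) := by
  obtain ⟨B, Φm, Θ, Θinv, hB, hΦm, -, -, -, hΘinv, hΘΘinv, hΘinvΘ, hΘ, hΦmΘ⟩ := hD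
  have hcol (j : Fin n) : Θinv.col j ∈ horizontalSections K B :=
    col_mem_horizontalSections (Matrix.ext hΘ) hΘΘinv hΘinvΘ hΘinv j
  have hsolvable : ∃ W : Fin n → Fin n → PowerSeries K,
      (∀ k, Horiz K B (W k)) ∧ LinearIndependent K W :=
    ⟨Θinv.col, hcol, (linearIndependent_cols_of_isUnit
      ⟨⟨Θinv, Θ, hΘinvΘ, hΘΘinv⟩, rfl⟩).restrict_scalars' K⟩
  intro v hv i
  obtain ⟨c, rfl⟩ := hVspan v hv
  set w := Θinv *ᵥ fun k => algebraMap K (PowerSeries K) (c k) with hw_def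
  have hw : w ∈ horizontalSections K B := by
    rw [hw_def, mulVec_algebraMap_eq_sum_smul_col]
    exact Submodule.sum_mem _ fun j _ => Submodule.smul_mem _ _ (hcol j)
  have hvw : (fun i => ∑ k, C (c k) * V k i) = Φm *ᵥ w := by
    rw [show Φm = (of V)ᵀ * Θ from Matrix.ext hΦmΘ, mulVec_mulVec, Matrix.mul_assoc, hΘΘinv,
      Matrix.mul_one]
    ext i
    simp [mulVec, dotProduct, mul_comm]
  rw [hvw]
  -- an index `j : Fin n` forces `1 ≤ n`, so the exponent `n - 1` is nonnegative
  exact LogBdd.sum (s := Finset.univ) fun j _ =>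
    (hΦm i j).mul_logBdd (sub_nonneg.mpr (Nat.one_le_cast.mpr j.pos))
      (hDwork n B hB hsolvable w hw j)

/-- Let `K` be a complete discretely valued field of mixed
characteristic `(0,p)`, `M` a finite free differential module over `K[[t]]₀` of
rank `m` (given by the matrix `A` with bounded entries) and `n = dim_K H⁰(M ⊗ K{t})`
(witnessed by the basis `V` of horizontal sections). Granting Dwork's theorem
(`hDwork`: for solvable modules of rank `r`, all horizontal sections have
logarithmic growth of order at most `r - 1`), if `M` satisfies Condition (D), then
every horizontal section of `M ⊗ K{t}` has logarithmic growth of order at most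
`n - 1`, i.e. `Fil_{n-1} H⁰(M ⊗ K{t}) = H⁰(M ⊗ K{t})`. -/
theorem stmt15 [CompleteSpace K] [IsUltrametricDist K] [CharZero K]
    (p : ℕ) (hp : p.Prime) (hpK : ‖(p : K)‖ < 1)
    (hdisc : ∃ c : ℝ, 1 < c ∧ ∀ x : K, x ≠ 0 → ∃ k : ℤ, ‖x‖ = c ^ k)
    (m n : ℕ) (A : Matrix (Fin m) (Fin m) (PowerSeries K))
    (hA : ∀ i j, Bdd K (A i j))
    -- `V` is a `K`-basis of `H⁰(M ⊗ K{t})`, so `n = dim_K H⁰(M ⊗ K{t})`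
    (V : Fin n → (Fin m → PowerSeries K))
    (hVhoriz : ∀ k, Horiz K A (V k))
    (hVli : LinearIndependent K V)
    (hVspan : ∀ v : Fin m → PowerSeries K, Horiz K A v →
      ∃ c : Fin n → K, v = fun i => ∑ k, PowerSeries.C (c k) * V k i)
    -- Dwork's theorem, taken as given
    (hDwork : ∀ (r : ℕ) (B : Matrix (Fin r) (Fin r) (PowerSeries K)),
      (∀ i j, Bdd K (B i j)) →
      (∃ W : Fin r → (Fin r → PowerSeries K),
        (∀ k, Horiz K B (W k)) ∧ LinearIndependent K W) →
      ∀ w : Fin r → PowerSeries K, Horiz K B w →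
        ∀ i, LogBdd K ((r : ℝ) - 1) (w i))
    -- Condition (D)
    (hD : CondD K A V) :
    ∀ v : Fin m → PowerSeries K, Horiz K A v →
      ∀ i, LogBdd K ((n : ℝ) - 1) (v i) :=
  stmt15_general m n A V hVspan hDwork hD

end Stmt15
end
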